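/- arXiv:2504.17348 — 2 statements merged into one kernel-verified Lean document; each statement's English description precedes it below -/
import Mathlib

section
/- Let F be an algebraically closed field, let A be an n×n matrix over F whose minimal polynomial is ∏_{i=1}^{s} (X − λ_i)^{a_i} with λ₁, …, λ_s pairwise distinct elements of F and each a_i ≥ 1. Suppose that rank((A − λ₁·I)^{a₁−1}) = rank((A − λ₁·I)^{a₁}) + 1 (equivalently, λ₁ has a unique Jordan block of maximal size a₁). Then the matrix (A − λ₁·I)^{a₁−1} · ∏_{i=2}^{s} (A − λ_i·I)^{a_i} has rank exactly 1. -/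
open Polynomial Matrix

/-!
With `N = A - λ₁ • 1`, `k = a₁ - 1` and `q = ∏_{i ≥ 2} (X - λᵢ) ^ aᵢ`, the matrix is `N ^ k * q(A)`.
Since `N ^ (k + 1) * q(A)` is the minimal polynomial evaluated at `A`, its columns lie in
`range (N ^ k) ⊓ ker N`, which by rank–nullity for `N` restricted to `range (N ^ k)` has dimension
`rank (N ^ k) - rank (N ^ (k + 1)) = 1`. It is nonzero because `(X - λ₁) ^ k * q` is a proper monic
divisor of the minimal polynomial.
-/

theorem Submodule.finrank_map_add_finrank_inf_ker {K V V₂ : Type*} [Field K] [AddCommGroup V]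
    [Module K V] [AddCommGroup V₂] [Module K V₂] [FiniteDimensional K V]
    (f : V →ₗ[K] V₂) (W : Submodule K V) :
    Module.finrank K (W.map f) + Module.finrank K ↥(W ⊓ LinearMap.ker f) = Module.finrank K W := by
  have hker : (LinearMap.ker f).comap W.subtype = (W ⊓ LinearMap.ker f).comap W.subtype := by
    rw [Submodule.comap_inf, Submodule.comap_subtype_self, top_inf_eq]
  have h := LinearMap.finrank_range_add_finrank_ker (f.domRestrict W)
  rwa [LinearMap.range_domRestrict, LinearMap.ker_domRestrict, hker,
    (Submodule.comapSubtypeEquivOfLe inf_le_left).finrank_eq] at h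

theorem Matrix.rank_eq_zero_iff {m n K : Type*} [Fintype n] [Field K] {M : Matrix m n K} :
    M.rank = 0 ↔ M = 0 := by
  classical
  refine ⟨fun h => ?_, fun h => h ▸ rank_zero⟩
  rw [Matrix.rank, Submodule.finrank_eq_zero, LinearMap.range_eq_bot, ← toLin'_apply'] at h
  exact toLin'.injective (h.trans (map_zero _).symm)

theorem Matrix.rank_pow_mul_le_one {n K : Type*} [Fintype n] [DecidableEq n] [Field K]
    {N B : Matrix n n K} {k : ℕ} (hrk : (N ^ k).rank = (N ^ (k + 1)).rank + 1)
    (hB : N ^ (k + 1) * B = 0) : (N ^ k * B).rank ≤ 1 := by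
  set f := N.mulVecLin
  have hpow (j : ℕ) : (N ^ j).mulVecLin = f ^ j := by rw [← toLin'_apply', toLin'_pow]; rfl
  have hrange :
      LinearMap.range (N ^ k * B).mulVecLin ≤ LinearMap.range (f ^ k) ⊓ LinearMap.ker f := by
    refine le_inf ?_ ?_
    · rw [mulVecLin_mul, hpow]; exact LinearMap.range_comp_le_range _ _
    · rintro _ ⟨v, rfl⟩
      rw [LinearMap.mem_ker, ← LinearMap.comp_apply, ← mulVecLin_mul, ← mul_assoc, ← pow_succ', hB,
        mulVecLin_zero, LinearMap.zero_apply]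
  have hmap : (LinearMap.range (f ^ k)).map f = LinearMap.range (f ^ (k + 1)) := by
    rw [← LinearMap.range_comp, ← Module.End.mul_eq_comp, ← pow_succ']
  have hnullity := Submodule.finrank_map_add_finrank_inf_ker f (LinearMap.range (f ^ k))
  rw [Matrix.rank, Matrix.rank, hpow, hpow] at hrk
  rw [hmap] at hnullity
  calc (N ^ k * B).rank ≤ Module.finrank K ↥(LinearMap.range (f ^ k) ⊓ LinearMap.ker f) :=
        Submodule.finrank_mono hrange
    _ = 1 := by omega

theorem rank_eq_one_of_unique_maximal_jordan_block_general
    (F : Type*) [Field F] (n s : ℕ) (hs : 0 < s)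
    (A : Matrix (Fin n) (Fin n) F) (lam : Fin s → F)
    (a : Fin s → ℕ) (ha : ∀ i, 1 ≤ a i)
    (hmin : minpoly F A = ∏ i, (X - C (lam i)) ^ a i)
    (hrk : Matrix.rank ((A - lam ⟨0, hs⟩ • (1 : Matrix (Fin n) (Fin n) F)) ^ (a ⟨0, hs⟩ - 1)) =
      Matrix.rank ((A - lam ⟨0, hs⟩ • (1 : Matrix (Fin n) (Fin n) F)) ^ a ⟨0, hs⟩) + 1) :
    Matrix.rank (Polynomial.aeval A
      ((X - C (lam ⟨0, hs⟩)) ^ (a ⟨0, hs⟩ - 1) *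
        ∏ i ∈ Finset.univ.erase ⟨0, hs⟩, (X - C (lam i)) ^ a i)) = 1 := by
  set i₀ : Fin s := ⟨0, hs⟩
  set k := a i₀ - 1
  set q := ∏ i ∈ Finset.univ.erase i₀, (X - C (lam i)) ^ a i
  set N := A - lam i₀ • (1 : Matrix (Fin n) (Fin n) F)
  have hk : k + 1 = a i₀ := Nat.sub_add_cancel (ha i₀)
  have hfactor : minpoly F A = (X - C (lam i₀)) ^ (k + 1) * q := by
    rw [hmin, hk]
    exact (Finset.mul_prod_erase _ _ (Finset.mem_univ i₀)).symm
  have hN : aeval A (X - C (lam i₀)) = N := by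
    simp [N, Algebra.algebraMap_eq_smul_one]
  have hkill : N ^ (k + 1) * aeval A q = 0 := by
    rw [← hN, ← map_pow, ← map_mul, ← hfactor, minpoly.aeval]
  have hne : aeval A ((X - C (lam i₀)) ^ k * q) ≠ 0 := by
    have hmonic : ((X - C (lam i₀)) ^ k * q).Monic :=
      ((monic_X_sub_C _).pow k).mul (monic_prod_of_monic _ _ fun i _ => (monic_X_sub_C _).pow _)
    refine minpoly.aeval_ne_zero_of_dvdNotUnit_minpoly (IsIntegral.of_finite F A) hmonic
      ⟨hmonic.ne_zero, X - C (lam i₀), not_isUnit_X_sub_C _, by rw [hfactor]; ring⟩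
  rw [map_mul, map_pow, hN] at hne ⊢
  rw [← hk] at hrk
  have hle := Matrix.rank_pow_mul_le_one hrk hkill
  have hpos := mt Matrix.rank_eq_zero_iff.mp hne
  omega

theorem rank_eq_one_of_unique_maximal_jordan_block
    (F : Type*) [Field F] [IsAlgClosed F] (n s : ℕ) (hs : 0 < s)
    (A : Matrix (Fin n) (Fin n) F) (lam : Fin s → F) (hinj : Function.Injective lam)
    (a : Fin s → ℕ) (ha : ∀ i, 1 ≤ a i)
    (hmin : minpoly F A = ∏ i, (X - C (lam i)) ^ a i)
    (hrk : Matrix.rank ((A - lam ⟨0, hs⟩ • (1 : Matrix (Fin n) (Fin n) F)) ^ (a ⟨0, hs⟩ - 1)) =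
      Matrix.rank ((A - lam ⟨0, hs⟩ • (1 : Matrix (Fin n) (Fin n) F)) ^ a ⟨0, hs⟩) + 1) :
    Matrix.rank (Polynomial.aeval A
      ((X - C (lam ⟨0, hs⟩)) ^ (a ⟨0, hs⟩ - 1) *
        ∏ i ∈ Finset.univ.erase ⟨0, hs⟩, (X - C (lam i)) ^ a i)) = 1 :=
  rank_eq_one_of_unique_maximal_jordan_block_general F n s hs A lam a ha hmin hrk
end

section
/- Let F be a field, let n ≥ 1, and let S be a finite generating system of the full matrix algebra M_n(F). If S contains a nonderogatory matrix, i.e., a matrix whose minimal polynomial has degree n, then ℓ(S) ≤ 2n − 2. -/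
open Polynomial Matrix

/-- The `F`-linear span of all words over `S` of length at most `i`
(the empty word being `1`). -/
def wordSpan (F : Type*) {A : Type*} [Field F] [Ring A] [Algebra F A]
    (S : Set A) (i : ℕ) : Submodule F A :=
  Submodule.span F {x : A | ∃ l : List A, l.length ≤ i ∧ (∀ a ∈ l, a ∈ S) ∧ l.prod = x}

/-- `S` is a generating system of the algebra `A`:
`A` is the union of the subspaces `wordSpan F S i`. -/
def IsGeneratingSystem (F : Type*) {A : Type*} [Field F] [Ring A] [Algebra F A]
    (S : Set A) : Prop :=
  ∀ x : A, ∃ i : ℕ, x ∈ wordSpan F S i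

/-- The length of a generating system `S`: the least `k` with `wordSpan F S k = ⊤`. -/
noncomputable def genLength (F : Type*) {A : Type*} [Field F] [Ring A] [Algebra F A]
    (S : Set A) : ℕ :=
  sInf {k : ℕ | wordSpan F S k = ⊤}

/-!
Over an algebraically closed field, suppose `wordSpan K T (2n - 2) ≠ ⊤`; then some `G ≠ 0` has
`tr (G x) = 0` on it. Reducing modulo the characteristic polynomial puts every `p(C)` into
`wordSpan K T (n - 1)`, so `tr (p(C) G x) = 0` for all `x ∈ wordSpan K T (n - 1)`. Peeling the
linear factors of `χ_C` off one at a time gives `p` and `μ` with `p(C) G ≠ 0` and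
`(C - μ) p(C) G = 0`. The eigenspaces of a nonderogatory `C` are lines, so `p(C) G = w rᵀ` has rank
one. But the vectors `x w` with `x ∈ wordSpan K T (n - 1)` fill `Kⁿ` (the chain of subspaces
`wordSpan K T k · w` grows strictly until it is everything), so `tr (p(C) G x) = rᵀ x w` cannot
vanish for all of them.

The general case follows by extending scalars to an algebraic closure: generation survives, while
the degree of the minimal polynomial and the equality `wordSpan F S k = ⊤` descend, both by
separating with the trace pairing.
-/

section WordSpan

variable {F A : Type*} [Field F] [Ring A] [Algebra F A] {S : Set A}

lemma wordSpan_mono {i j : ℕ} (hij : i ≤ j) : wordSpan F S i ≤ wordSpan F S j :=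
  Submodule.span_mono fun _ ⟨l, hl, hlS, hx⟩ => ⟨l, hl.trans hij, hlS, hx⟩

lemma list_prod_mem_wordSpan {l : List A} (hlS : ∀ a ∈ l, a ∈ S) :
    l.prod ∈ wordSpan F S l.length :=
  Submodule.subset_span ⟨l, le_rfl, hlS, rfl⟩

lemma one_mem_wordSpan (i : ℕ) : (1 : A) ∈ wordSpan F S i :=
  wordSpan_mono (Nat.zero_le i) (list_prod_mem_wordSpan (l := []) (by simp))

lemma mem_wordSpan_one {a : A} (ha : a ∈ S) : a ∈ wordSpan F S 1 := by
  simpa using list_prod_mem_wordSpan (F := F) (l := [a]) (by simpa using ha)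

lemma pow_mem_wordSpan {a : A} (ha : a ∈ S) (k : ℕ) : a ^ k ∈ wordSpan F S k := by
  simpa using list_prod_mem_wordSpan (F := F) (l := List.replicate k a)
    (fun b hb => (List.eq_of_mem_replicate hb) ▸ ha)

lemma mul_mem_wordSpan {x y : A} {i j : ℕ} (hx : x ∈ wordSpan F S i)
    (hy : y ∈ wordSpan F S j) : x * y ∈ wordSpan F S (i + j) := by
  have hxy := Submodule.mul_mem_mul hx hy
  rw [wordSpan, wordSpan, Submodule.span_mul_span] at hxy
  refine Submodule.span_mono ?_ hxy
  rintro _ ⟨_, ⟨l, hl, hlS, rfl⟩, _, ⟨l', hl', hl'S, rfl⟩, rfl⟩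
  refine ⟨l ++ l', by simpa using add_le_add hl hl', ?_, List.prod_append⟩
  simpa [or_imp, forall_and] using ⟨hlS, hl'S⟩

lemma aeval_mem_wordSpan {a : A} (ha : a ∈ S) {p : F[X]} {d : ℕ} (hp : p.natDegree ≤ d) :
    aeval a p ∈ wordSpan F S d := by
  rw [aeval_eq_sum_range]
  refine Submodule.sum_mem _ fun k hk => Submodule.smul_mem _ _ ?_
  exact wordSpan_mono (by rw [Finset.mem_range] at hk; omega) (pow_mem_wordSpan ha k)

end WordSpan

section Image

variable {F K A B : Type*} [Field F] [Field K] [Ring A] [Algebra F A] [Ring B] [Algebra K B]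
  [Algebra F B] (f : A →ₐ[F] B) {S : Set A}

lemma wordSpan_image_le_span (i : ℕ) :
    wordSpan K (f '' S) i ≤ Submodule.span K (f '' wordSpan F S i) := by
  refine Submodule.span_le.mpr ?_
  rintro _ ⟨l', hl', hl'S, rfl⟩
  obtain ⟨l, hlS, rfl⟩ : ∃ l : List A, (∀ a ∈ l, a ∈ S) ∧ l.map f = l' := by
    induction l' with
    | nil => exact ⟨[], by simp⟩
    | cons b t ih =>
      obtain ⟨a, haS, rfl⟩ := hl'S b List.mem_cons_self
      obtain ⟨l, hlS, rfl⟩ := ih (by simp at hl'; omega)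
        fun c hc => hl'S c (List.mem_cons_of_mem _ hc)
      exact ⟨a :: l, by simpa using ⟨haS, hlS⟩, rfl⟩
  rw [← map_list_prod]
  exact Submodule.subset_span
    ⟨l.prod, wordSpan_mono (by simpa using hl') (list_prod_mem_wordSpan hlS), rfl⟩

variable [Algebra F K] [IsScalarTower F K B]

lemma map_mem_wordSpan {x : A} {i : ℕ} (hx : x ∈ wordSpan F S i) :
    f x ∈ wordSpan K (f '' S) i := by
  suffices wordSpan F S i ≤ ((wordSpan K (f '' S) i).restrictScalars F).comap f.toLinearMap from
    this hx
  refine Submodule.span_le.mpr ?_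
  rintro _ ⟨l, hl, hlS, rfl⟩
  refine Submodule.subset_span ⟨l.map f, by simpa using hl, ?_, (map_list_prod f l).symm⟩
  simpa using fun a ha => Set.mem_image_of_mem f (hlS a ha)

lemma IsGeneratingSystem.image (hf : Submodule.span K (Set.range f) = ⊤)
    (hS : IsGeneratingSystem F S) : IsGeneratingSystem K (f '' S) := by
  intro y
  have hy : y ∈ Submodule.span K (Set.range f) := hf ▸ Submodule.mem_top
  induction hy using Submodule.span_induction with
  | mem _ hy =>
    obtain ⟨x, rfl⟩ := hy
    obtain ⟨i, hi⟩ := hS x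
    exact ⟨i, map_mem_wordSpan f hi⟩
  | zero => exact ⟨0, Submodule.zero_mem _⟩
  | add y z _ _ hy hz =>
    obtain ⟨i, hi⟩ := hy
    obtain ⟨j, hj⟩ := hz
    exact ⟨max i j, Submodule.add_mem _ (wordSpan_mono (le_max_left i j) hi)
      (wordSpan_mono (le_max_right i j) hj)⟩
  | smul c y _ hy =>
    obtain ⟨i, hi⟩ := hy
    exact ⟨i, Submodule.smul_mem _ c hi⟩

end Image

lemma Submodule.eq_top_of_monotone_of_le_imp_eq_top {K V : Type*} [Field K] [AddCommGroup V]
    [Module K V] [FiniteDimensional K V] {W : ℕ → Submodule K V} (hmono : Monotone W)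
    (h0 : W 0 ≠ ⊥) (hstab : ∀ k, W (k + 1) ≤ W k → W k = ⊤) :
    W (Module.finrank K V - 1) = ⊤ := by
  have grow : ∀ k, W k = ⊤ ∨ k + 1 ≤ Module.finrank K (W k) := by
    intro k
    induction k with
    | zero => exact .inr (Submodule.one_le_finrank_iff.mpr h0)
    | succ k ih =>
      by_cases hle : W (k + 1) ≤ W k
      · exact .inl (top_le_iff.mp (hstab k hle ▸ hmono k.le_succ))
      · have hk1 : W k ≤ W (k + 1) := hmono k.le_succ
        have hlt := Submodule.finrank_lt_finrank_of_lt (lt_of_le_not_ge hk1 hle)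
        rcases ih with htop | hk
        · exact .inl (top_le_iff.mp (htop ▸ hk1))
        · exact .inr (by omega)
  rcases grow (Module.finrank K V - 1) with htop | hk
  · exact htop
  · exact Submodule.eq_top_of_finrank_eq (le_antisymm (Submodule.finrank_le _) (by omega))

section MatrixWordSpan

variable {K ι : Type*} [Field K] [Fintype ι] [DecidableEq ι] {T : Set (Matrix ι ι K)}

lemma Matrix.exists_mulVec_eq {u : ι → K} (hu : u ≠ 0) (z : ι → K) :
    ∃ X : Matrix ι ι K, X *ᵥ u = z := by
  obtain ⟨j, hj⟩ := Function.ne_iff.mp hu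
  refine ⟨vecMulVec z (Pi.single j (u j)⁻¹), ?_⟩
  rw [vecMulVec_mulVec, op_smul_eq_smul, single_dotProduct, inv_mul_cancel₀ hj, one_smul]

lemma IsGeneratingSystem.eq_top_of_forall_mulVec_mem (hgen : IsGeneratingSystem K T) {W : Submodule K (ι → K)}
    {u : ι → K} (hu : u ≠ 0) (huW : u ∈ W) (hW : ∀ a ∈ T, ∀ v ∈ W, a *ᵥ v ∈ W) : W = ⊤ := by
  have hwords : ∀ l : List (Matrix ι ι K), (∀ a ∈ l, a ∈ T) → l.prod *ᵥ u ∈ W := by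
    intro l hlT
    induction l with
    | nil => simpa using huW
    | cons a t ih =>
      rw [List.prod_cons, ← mulVec_mulVec]
      exact hW a (hlT a List.mem_cons_self) _ (ih fun b hb => hlT b (List.mem_cons_of_mem a hb))
  refine Submodule.eq_top_iff'.mpr fun z => ?_
  obtain ⟨X, rfl⟩ := Matrix.exists_mulVec_eq hu z
  obtain ⟨i, hX⟩ := hgen X
  induction hX using Submodule.span_induction with
  | mem _ hx =>
    obtain ⟨l, -, hlT, rfl⟩ := hx
    exact hwords l hlT
  | zero => simp
  | add X Y _ _ hX hY => simpa [add_mulVec] using W.add_mem hX hY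
  | smul c X _ hX => simpa [smul_mulVec] using W.smul_mem c hX

theorem IsGeneratingSystem.exists_mem_wordSpan_mulVec_eq (hgen : IsGeneratingSystem K T) {u : ι → K} (hu : u ≠ 0)
    (z : ι → K) : ∃ X ∈ wordSpan K T (Fintype.card ι - 1), X *ᵥ u = z := by
  let ev : Matrix ι ι K →ₗ[K] ι → K := LinearMap.applyₗ u ∘ₗ Matrix.toLin'.toLinearMap
  have hev (X : Matrix ι ι K) : ev X = X *ᵥ u := Matrix.toLin'_apply X u
  let W k := (wordSpan K T k).map ev
  have hu0 : u ∈ W 0 := ⟨1, one_mem_wordSpan 0, by simp [hev]⟩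
  have hstab (k : ℕ) (hk : W (k + 1) ≤ W k) : W k = ⊤ := by
    refine hgen.eq_top_of_forall_mulVec_mem hu ⟨1, one_mem_wordSpan k, by simp [hev]⟩ ?_
    rintro a ha _ ⟨X, hX, rfl⟩
    refine hk ⟨a * X, ?_, by simp [hev, mulVec_mulVec]⟩
    simpa [add_comm] using mul_mem_wordSpan (mem_wordSpan_one ha) hX
  have htop := Submodule.eq_top_of_monotone_of_le_imp_eq_top (W := W)
    (fun i j hij => Submodule.map_mono (wordSpan_mono hij))
    (fun h => hu (by simpa [h] using hu0)) hstab
  rw [Module.finrank_fintype_fun_eq_card] at htop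
  obtain ⟨X, hX, hXz⟩ := htop ▸ Submodule.mem_top (x := z)
  exact ⟨X, hX, (hev X).symm.trans hXz⟩

lemma aeval_mem_wordSpan_card_sub_one {C : Matrix ι ι K} (hC : C ∈ T) (p : K[X]) :
    aeval C p ∈ wordSpan K T (Fintype.card ι - 1) := by
  have hχ := charpoly_monic C
  rw [← modByMonic_add_div p C.charpoly, map_add, map_mul, aeval_self_charpoly, zero_mul, add_zero]
  refine aeval_mem_wordSpan hC ?_
  by_cases h1 : C.charpoly = 1
  · simp [h1]
  · have := natDegree_modByMonic_lt p hχ h1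
    rw [charpoly_natDegree_eq_dim] at this
    omega

end MatrixWordSpan

section Nonderogatory

variable {K V : Type*} [Field K] [AddCommGroup V] [Module K V]

lemma Module.End.aeval_restrict_apply {f : Module.End K V} {W : Submodule K V}
    (hW : ∀ v ∈ W, f v ∈ W) (p : K[X]) (v : W) :
    (aeval (f.restrict hW) p v : V) = aeval f p v := by
  induction p using Polynomial.induction_on' with
  | add p q hp hq => simp [hp, hq]
  | monomial k a =>
    simp only [aeval_monomial, Module.End.mul_apply, Module.algebraMap_end_apply,
      Submodule.coe_smul]
    rw [Module.End.pow_restrict]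
    rfl

variable [FiniteDimensional K V]

theorem Module.End.finrank_ker_sub_algebraMap_le_one {f : Module.End K V}
    (hf : (minpoly K f).natDegree = Module.finrank K V) (μ : K) :
    Module.finrank K (LinearMap.ker (f - algebraMap K _ μ)) ≤ 1 := by
  by_contra! hker
  set D := f - algebraMap K _ μ
  have hD : ∀ v ∈ LinearMap.range D, D v ∈ LinearMap.range D := fun v _ => ⟨v, rfl⟩
  set χ := LinearMap.charpoly (D.restrict hD)
  have hDχ : aeval D (χ * X) = 0 := by
    ext v
    rw [map_mul, aeval_X, Module.End.mul_apply,
      ← Module.End.aeval_restrict_apply hD χ ⟨D v, v, rfl⟩, LinearMap.aeval_self_charpoly]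
    rfl
  set q := (χ * X).comp (X - C μ)
  have hq : q.Monic :=
    ((LinearMap.charpoly_monic _).mul monic_X).comp (monic_X_sub_C μ) (by simp)
  have hfq : aeval f q = 0 := by
    rwa [aeval_comp, map_sub, aeval_X, aeval_C]
  have hdeg : q.natDegree = Module.finrank K (LinearMap.range D) + 1 := by
    rw [natDegree_comp, natDegree_X_sub_C, mul_one,
      natDegree_mul (LinearMap.charpoly_monic _).ne_zero X_ne_zero, natDegree_X,
      LinearMap.charpoly_natDegree]
  have := natDegree_le_natDegree (minpoly.min K f hq hfq)
  have := LinearMap.finrank_range_add_finrank_ker D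
  omega

end Nonderogatory

lemma exists_aeval_mul_ne_zero_and_sub_mul_eq_zero {R A : Type*} [CommRing R] [Ring A]
    [Algebra R A] (a : A) (m : Multiset R) {y : A}
    (hm : aeval a (m.map fun μ => X - C μ).prod * y = 0) (hy : y ≠ 0) :
    ∃ p : R[X], ∃ μ : R, aeval a p * y ≠ 0 ∧ (a - algebraMap R A μ) * (aeval a p * y) = 0 := by
  induction m using Multiset.induction_on generalizing y with
  | empty => simp_all
  | cons μ m ih =>
    by_cases hμ : (a - algebraMap R A μ) * y = 0
    · exact ⟨1, μ, by simpa using hy, by simpa using hμ⟩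
    · have hm' : aeval a (m.map fun μ => X - C μ).prod * ((a - algebraMap R A μ) * y) = 0 := by
        rw [← mul_assoc, ← hm, Multiset.map_cons, Multiset.prod_cons, mul_comm (X - C μ),
          map_mul, map_sub, aeval_X, aeval_C]
      obtain ⟨p, ν, hp, hpν⟩ := ih hm' hμ
      refine ⟨p * (X - C μ), ν, ?_, ?_⟩ <;>
        simpa only [map_mul, map_sub, aeval_X, aeval_C, mul_assoc]

section Trace

variable {K ι : Type*} [Field K] [Fintype ι] [DecidableEq ι]

lemma Matrix.exists_trace_mul_eq (φ : Module.Dual K (Matrix ι ι K)) :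
    ∃ G : Matrix ι ι K, ∀ X, trace (G * X) = φ X := by
  refine ⟨of fun i j => φ (single j i 1), fun X => ?_⟩
  show (traceLinearMap ι K K ∘ₗ LinearMap.mulLeft K _) X = φ X
  congr 1
  refine Matrix.ext_linearMap (R := K) fun i j => LinearMap.ext_ring ?_
  simp [trace_mul_single]

lemma Matrix.exists_trace_mul_eq_zero_of_notMem {W : Submodule K (Matrix ι ι K)}
    {X : Matrix ι ι K} (hX : X ∉ W) :
    ∃ G : Matrix ι ι K, (∀ Y ∈ W, trace (G * Y) = 0) ∧ trace (G * X) ≠ 0 := by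
  obtain ⟨φ, hφX, hφW⟩ := Submodule.exists_dual_map_eq_bot_of_notMem hX inferInstance
  obtain ⟨G, hG⟩ := exists_trace_mul_eq φ
  refine ⟨G, fun Y hY => ?_, by rwa [hG]⟩
  rw [hG, ← Submodule.mem_bot K, ← hφW]
  exact Submodule.mem_map_of_mem hY

end Trace

section AlgClosed

variable {K ι : Type*} [Field K] [Fintype ι] [DecidableEq ι]

lemma Matrix.exists_eq_vecMulVec_of_mulVec_mem {Y : Matrix ι ι K} {W : Submodule K (ι → K)}
    (hW : Module.finrank K W ≤ 1) (hY : ∀ v, Y *ᵥ v ∈ W) : ∃ w r : ι → K, Y = vecMulVec w r := by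
  obtain ⟨w, hw⟩ := ((Submodule.finrank_le_one_iff_isPrincipal W).mp hW).principal
  have hcol (j : ι) : ∃ c : K, c • w = Y *ᵥ Pi.single j 1 :=
    Submodule.mem_span_singleton.mp (hw ▸ hY _)
  choose r hr using hcol
  refine ⟨w, r, ext fun i j => ?_⟩
  simpa [mulVec_single_one, vecMulVec_apply, mul_comm] using congrFun (hr j) i |>.symm

lemma Matrix.exists_eq_vecMulVec_of_sub_mul_eq_zero {C Y : Matrix ι ι K}
    (hC : (minpoly K C).natDegree = Fintype.card ι) {μ : K} (hY : (C - algebraMap K _ μ) * Y = 0) :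
    ∃ w r : ι → K, Y = vecMulVec w r := by
  let f := toLinAlgEquiv' C
  have hf : (minpoly K f).natDegree = Module.finrank K (ι → K) := by
    rw [minpoly.algEquiv_eq, hC, Module.finrank_fintype_fun_eq_card]
  refine exists_eq_vecMulVec_of_mulVec_mem (Module.End.finrank_ker_sub_algebraMap_le_one hf μ) fun v => ?_
  rw [LinearMap.mem_ker, ← AlgEquiv.commutes toLinAlgEquiv' μ, ← map_sub, toLinAlgEquiv'_apply,
    mulVec_mulVec, hY, zero_mulVec]

theorem wordSpan_eq_top_of_isAlgClosed [IsAlgClosed K] {T : Set (Matrix ι ι K)}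
    (hgen : IsGeneratingSystem K T) {C : Matrix ι ι K} (hCT : C ∈ T)
    (hC : (minpoly K C).natDegree = Fintype.card ι) :
    wordSpan K T (Fintype.card ι - 1 + (Fintype.card ι - 1)) = ⊤ := by
  rw [Submodule.eq_top_iff']
  by_contra! ⟨X₀, hX₀⟩
  obtain ⟨G, hGW, hGX₀⟩ := exists_trace_mul_eq_zero_of_notMem hX₀
  have hG : G ≠ 0 := by rintro rfl; simp at hGX₀
  have hχ : aeval C (C.charpoly.roots.map fun μ => X - Polynomial.C μ).prod * G = 0 := by
    rw [← ((IsAlgClosed.splits _).eq_prod_roots_of_monic (charpoly_monic C)), aeval_self_charpoly,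
      zero_mul]
  obtain ⟨p, μ, hY, hYμ⟩ := exists_aeval_mul_ne_zero_and_sub_mul_eq_zero C _ hχ hG
  obtain ⟨w, r, hwr⟩ := exists_eq_vecMulVec_of_sub_mul_eq_zero hC hYμ
  obtain ⟨hw, hr⟩ : w ≠ 0 ∧ r ≠ 0 := by rwa [hwr, Ne, vecMulVec_eq_zero, not_or] at hY
  obtain ⟨j, hj⟩ := Function.ne_iff.mp hr
  obtain ⟨x, hx, hxw⟩ := hgen.exists_mem_wordSpan_mulVec_eq hw (Pi.single j 1)
  have hzero := hGW _ (mul_mem_wordSpan hx (aeval_mem_wordSpan_card_sub_one hCT p))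
  have hrj : trace (G * (x * aeval C p)) = r j := by
    calc trace (G * (x * aeval C p)) = trace (aeval C p * G * x) := by
          rw [← mul_assoc, trace_mul_comm, mul_assoc]
      _ = trace (vecMulVec w (r ᵥ* x)) := by rw [hwr, vecMulVec_mul]
      _ = r j := by
          rw [trace_vecMulVec, dotProduct_comm, ← dotProduct_mulVec, hxw, dotProduct_single_one]
  exact hj (hrj.symm.trans hzero)

end AlgClosed

section Minpoly

variable {F A : Type*} [Field F] [Ring A] [Algebra F A]

lemma pow_natDegree_minpoly_mem_span {x : A} (hx : IsIntegral F x) :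
    x ^ (minpoly F x).natDegree ∈
      Submodule.span F (Set.range fun i : Fin (minpoly F x).natDegree => x ^ (i : ℕ)) := by
  have h := minpoly.aeval F x
  rw [(minpoly.monic hx).as_sum] at h
  simp only [map_add, map_sum, map_mul, map_pow, aeval_X, aeval_C, ← Algebra.smul_def] at h
  rw [eq_neg_of_add_eq_zero_left h]
  refine Submodule.neg_mem _ (Submodule.sum_mem _ fun i hi => Submodule.smul_mem _ _ ?_)
  exact Submodule.subset_span ⟨⟨i, Finset.mem_range.mp hi⟩, rfl⟩

lemma natDegree_minpoly_le_of_pow_mem_span {x : A} {d : ℕ}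
    (h : x ^ d ∈ Submodule.span F (Set.range fun i : Fin d => x ^ (i : ℕ))) :
    (minpoly F x).natDegree ≤ d := by
  obtain ⟨c, hc⟩ := (Submodule.mem_span_range_iff_exists_fun F).mp h
  have hlt := degree_sum_fin_lt c
  have hp := monic_X_pow_sub hlt
  have hpx : aeval x (X ^ d - ∑ i : Fin d, C (c i) * X ^ (i : ℕ)) = 0 := by
    simp [← Algebra.smul_def, hc]
  have hdeg := minpoly.min F x hp hpx
  rw [degree_sub_eq_left_of_degree_lt (by rwa [degree_X_pow]), degree_X_pow] at hdeg
  exact natDegree_le_iff_degree_le.mpr hdeg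

end Minpoly

section BaseChange

variable {F K ι : Type*} [Field F] [Field K] [Algebra F K] [Fintype ι] [DecidableEq ι]

lemma Matrix.span_range_mapMatrix_ofId :
    Submodule.span K (Set.range ((Algebra.ofId F K).mapMatrix (m := ι))) = ⊤ := by
  rw [eq_top_iff, ← (stdBasis K ι ι).span_eq]
  refine Submodule.span_mono ?_
  rintro _ ⟨⟨i, j⟩, rfl⟩
  exact ⟨single i j 1, by ext; simp [stdBasis_eq_single, single_apply]⟩

lemma Matrix.mem_of_mapMatrix_ofId_mem_span {W : Submodule F (Matrix ι ι F)} {X : Matrix ι ι F}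
    (hX : (Algebra.ofId F K).mapMatrix X ∈
      Submodule.span K ((Algebra.ofId F K).mapMatrix '' (W : Set (Matrix ι ι F)))) :
    X ∈ W := by
  by_contra hXW
  obtain ⟨G, hGW, hGX⟩ := exists_trace_mul_eq_zero_of_notMem hXW
  have htr (Y : Matrix ι ι F) : trace ((Algebra.ofId F K).mapMatrix G *
      (Algebra.ofId F K).mapMatrix Y) = algebraMap F K (trace (G * Y)) := by
    rw [← map_mul, AddMonoidHom.map_trace]
    rfl
  let ψ := traceLinearMap ι K K ∘ₗ LinearMap.mulLeft K ((Algebra.ofId F K).mapMatrix G)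
  have hψ : Submodule.span K ((Algebra.ofId F K).mapMatrix '' (W : Set (Matrix ι ι F))) ≤
      LinearMap.ker ψ := by
    refine Submodule.span_le.mpr ?_
    rintro _ ⟨Y, hY, rfl⟩
    simp only [SetLike.mem_coe, LinearMap.mem_ker, ψ, LinearMap.comp_apply,
      LinearMap.mulLeft_apply, traceLinearMap_apply, htr, hGW Y hY, map_zero]
  have hψX := hψ hX
  simp only [LinearMap.mem_ker, ψ, LinearMap.comp_apply, LinearMap.mulLeft_apply,
    traceLinearMap_apply, htr, map_eq_zero_iff _ (algebraMap F K).injective] at hψX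
  exact hGX hψX

theorem wordSpan_eq_top_of_image_mapMatrix_ofId {S : Set (Matrix ι ι F)} {i : ℕ}
    (h : wordSpan K ((Algebra.ofId F K).mapMatrix '' S) i = ⊤) : wordSpan F S i = ⊤ := by
  refine Submodule.eq_top_iff'.mpr fun X => mem_of_mapMatrix_ofId_mem_span (K := K) ?_
  exact wordSpan_image_le_span (S := S) _ i (by rw [h]; exact Submodule.mem_top)

theorem natDegree_minpoly_mapMatrix_ofId (C : Matrix ι ι F) :
    (minpoly K ((Algebra.ofId F K).mapMatrix C)).natDegree = (minpoly F C).natDegree := by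
  set Φ := (Algebra.ofId F K).mapMatrix (m := ι)
  have hC : IsIntegral F C := .of_finite F C
  refine le_antisymm ?_ ?_
  · have hdvd := minpoly.dvd K (Φ C) (p := (minpoly F C).map (algebraMap F K))
      (by rw [aeval_map_algebraMap, aeval_algHom_apply, minpoly.aeval, map_zero])
    simpa using natDegree_le_of_dvd hdvd (map_ne_zero (minpoly.ne_zero hC))
  · refine natDegree_minpoly_le_of_pow_mem_span (mem_of_mapMatrix_ofId_mem_span (K := K) ?_)
    rw [map_pow]
    refine Submodule.span_mono ?_ (pow_natDegree_minpoly_mem_span (.of_finite K (Φ C)))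
    rintro _ ⟨i, rfl⟩
    exact ⟨C ^ (i : ℕ), Submodule.subset_span ⟨i, rfl⟩, map_pow Φ C i⟩

end BaseChange

theorem length_le_of_nonderogatory_mem_general
    (F : Type*) [Field F] (n : ℕ)
    (S : Finset (Matrix (Fin n) (Fin n) F))
    (hgen : IsGeneratingSystem F (S : Set (Matrix (Fin n) (Fin n) F)))
    (hA : ∃ M ∈ S, (minpoly F M).natDegree = n) :
    genLength F (S : Set (Matrix (Fin n) (Fin n) F)) ≤ 2 * n - 2 := by
  obtain ⟨C, hCS, hC⟩ := hA
  let Φ := (Algebra.ofId F (AlgebraicClosure F)).mapMatrix (m := Fin n)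
  have htop := wordSpan_eq_top_of_isAlgClosed
    (hgen.image Φ Matrix.span_range_mapMatrix_ofId) (Set.mem_image_of_mem Φ hCS)
    (by rw [natDegree_minpoly_mapMatrix_ofId, hC, Fintype.card_fin])
  rw [Fintype.card_fin, show n - 1 + (n - 1) = 2 * n - 2 by omega] at htop
  exact Nat.sInf_le (wordSpan_eq_top_of_image_mapMatrix_ofId htop)

theorem length_le_of_nonderogatory_mem
    (F : Type*) [Field F] (n : ℕ) (hn : 1 ≤ n)
    (S : Finset (Matrix (Fin n) (Fin n) F))
    (hgen : IsGeneratingSystem F (S : Set (Matrix (Fin n) (Fin n) F)))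
    (hA : ∃ M ∈ S, (minpoly F M).natDegree = n) :
    genLength F (S : Set (Matrix (Fin n) (Fin n) F)) ≤ 2 * n - 2 :=
  length_le_of_nonderogatory_mem_general F n S hgen hA
end
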